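/- arXiv:1511.03171 — 2 statements merged into one kernel-verified Lean document; each statement's English description precedes it below -/
import Mathlib

section
/- Let A be a skew left brace and r_A : A × A → A × A the map r_A(a,b) = (λ_a(b), λ⁻¹_{λ_a(b)}((a∘b)⁻¹·a·(a∘b))). Then r_A is involutive (i.e. r_A ∘ r_A = id on A × A) if and only if the group (A,·) is abelian, i.e. a·b = b·a for all a,b ∈ A. -/
/-!
Applying `r_A` twice, the first coordinate is `λ_u (λ⁻¹_u c) = c` with `u = λ_a b` and
`c = (a ∘ b)⁻¹ · a · (a ∘ b)`, so involutivity forces `a` to commute with every `a ∘ b`; as `b`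
varies, `a ∘ b` runs over all of `A`. Conversely, in an abelian group the conjugation disappears,
`r_A (a, b) = (λ_a b, λ⁻¹_{λ_a b} a)`, and this map is visibly an involution.
-/

/-- A skew left brace structure on a group `(A, ·)`: a second group structure
`(a, b) ↦ circ a b` (with identity `circOne` and inverse `circInv`) satisfying
`a ∘ (b · c) = (a ∘ b) · a⁻¹ · (a ∘ c)`. -/
structure SkewLeftBrace (A : Type*) [Group A] where
  circ : A → A → A
  circ_assoc : ∀ a b c : A, circ (circ a b) c = circ a (circ b c)
  circOne : A
  circOne_circ : ∀ a : A, circ circOne a = a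
  circ_circOne : ∀ a : A, circ a circOne = a
  circInv : A → A
  circInv_circ : ∀ a : A, circ (circInv a) a = circOne
  circ_circInv : ∀ a : A, circ a (circInv a) = circOne
  circ_mul : ∀ a b c : A, circ a (b * c) = circ a b * a⁻¹ * circ a c

namespace SkewLeftBrace

variable {A : Type*} [Group A]

/-- The map `λ_a : b ↦ a⁻¹ · (a ∘ b)`. -/
def lam (S : SkewLeftBrace A) (a b : A) : A := a⁻¹ * S.circ a b

/-- The inverse `λ⁻¹_a` of the bijective map `λ_a`. -/
noncomputable def lamInv (S : SkewLeftBrace A) (a : A) : A → A :=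
  Function.invFun (S.lam a)

/-- The canonical solution `r_A (a, b) = (λ_a b, λ⁻¹_{λ_a b} ((a ∘ b)⁻¹ · a · (a ∘ b)))`
associated with a skew left brace. -/
noncomputable def rmap (S : SkewLeftBrace A) : A × A → A × A :=
  fun p => (S.lam p.1 p.2,
    S.lamInv (S.lam p.1 p.2) ((S.circ p.1 p.2)⁻¹ * p.1 * S.circ p.1 p.2))

end SkewLeftBrace

namespace SkewLeftBrace

variable {A : Type*} [Group A] (S : SkewLeftBrace A)

theorem circ_circInv_circ (a b : A) : S.circ a (S.circ (S.circInv a) b) = b := by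
  rw [← S.circ_assoc, S.circ_circInv, S.circOne_circ]

theorem lam_bijective (a : A) : Function.Bijective (S.lam a) := by
  refine Function.bijective_iff_has_inverse.mpr ⟨fun b => S.circ (S.circInv a) (a * b), ?_, ?_⟩
  · intro b
    simp only [lam, mul_inv_cancel_left, ← S.circ_assoc, S.circInv_circ, S.circOne_circ]
  · intro b
    simp only [lam, S.circ_circInv_circ, inv_mul_cancel_left]

theorem lam_lamInv (a b : A) : S.lam a (S.lamInv a b) = b :=
  Function.rightInverse_invFun (S.lam_bijective a).surjective b

theorem lamInv_lam (a b : A) : S.lamInv a (S.lam a b) = b :=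
  Function.leftInverse_invFun (S.lam_bijective a).injective b

theorem rmap_rmap_fst (a b : A) :
    (S.rmap (S.rmap (a, b))).1 = (S.circ a b)⁻¹ * a * S.circ a b := by
  simp only [rmap, lam_lamInv]

theorem rmap_of_comm (hA : ∀ a b : A, a * b = b * a) (a b : A) :
    S.rmap (a, b) = (S.lam a b, S.lamInv (S.lam a b) a) := by
  simp only [rmap, hA _ a, inv_mul_cancel_right]

end SkewLeftBrace

/-- The solution `r_A` associated with a skew left brace `A` is involutive if and only if
the group `(A, ·)` is abelian. -/
theorem skewLeftBrace_rmap_involutive_iff {A : Type*} [Group A] (S : SkewLeftBrace A) :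
    S.rmap ∘ S.rmap = id ↔ ∀ a b : A, a * b = b * a := by
  constructor
  · intro h a c
    have hinv : ∀ p, S.rmap (S.rmap p) = p := congrFun h
    have hconj : a = c⁻¹ * a * c := by
      simpa only [hinv, S.circ_circInv_circ] using S.rmap_rmap_fst a (S.circ (S.circInv a) c)
    nth_rw 2 [hconj]
    group
  · intro hA
    funext ⟨a, b⟩
    simp only [Function.comp_apply, id, S.rmap_of_comm hA, S.lam_lamInv, S.lamInv_lam]
end

section
/- Let A be a skew left brace. Then the set {(λ_a, a) : a ∈ A} is a regular subgroup of the holomorph Hol(A,·) = Aut(A,·) ⋉ (A,·). -/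
/-- The holomorph `Hol(A) = Aut(A) ⋉ A` of a group `A`, realized as the semidirect
product `A ⋊ Aut(A)`; an element `h` has components `h.left ∈ A` and
`h.right ∈ Aut(A)`, and multiplication satisfies
`(f, a)(g, b) = (fg, a · f(b))`. -/
abbrev Hol (A : Type*) [Group A] :=
  SemidirectProduct A (MulAut A) (MonoidHom.id (MulAut A))

/-- A subgroup `H` of `Hol(A)` is regular if for each `a ∈ A` there is a unique
`(f, x) ∈ H` with `x · f(a) = 1`. -/
def IsRegularSubgroup {A : Type*} [Group A] (H : Subgroup (Hol A)) : Prop :=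
  ∀ a : A, ∃! h : Hol A, h ∈ H ∧ h.left * h.right a = 1

/-!
The map `a ↦ (λ_a, a)` is a homomorphism from the circle group `(A, ∘)` to `Hol(A, ·)`:
`(λ_a, a)(λ_b, b) = (λ_a λ_b, a · λ_a(b)) = (λ_{a ∘ b}, a ∘ b)`, since `λ` is itself a
homomorphism `(A, ∘) → Aut(A, ·)`. Its image is therefore a subgroup, and the element of the image
sending `a` to `1` is `(λ_x, x)` with `x ∘ a = 1`, i.e. `x` is the `∘`-inverse of `a`.
-/

namespace SkewLeftBrace

variable {A : Type*} [Group A] (S : SkewLeftBrace A)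

theorem circ_one (a : A) : S.circ a 1 = a := by
  have h := S.circ_mul a 1 1
  rw [mul_one, mul_assoc, left_eq_mul] at h
  exact (inv_mul_eq_one.mp h).symm

theorem circOne_eq_one : S.circOne = 1 := by
  rw [← S.circ_one S.circOne, S.circOne_circ]

theorem circ_inv (a b : A) : S.circ a b⁻¹ = a * (S.circ a b)⁻¹ * a := by
  have h := S.circ_mul a b b⁻¹
  rw [mul_inv_cancel, circ_one] at h
  calc S.circ a b⁻¹ = (S.circ a b * a⁻¹)⁻¹ * (S.circ a b * a⁻¹ * S.circ a b⁻¹) := by group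
    _ = a * (S.circ a b)⁻¹ * a := by rw [← h]; group

def lambda (a b : A) : A := a⁻¹ * S.circ a b

theorem mul_lambda (a b : A) : a * S.lambda a b = S.circ a b := by
  rw [lambda, mul_inv_cancel_left]

theorem lambda_mul (a b c : A) : S.lambda a (b * c) = S.lambda a b * S.lambda a c := by
  simp only [lambda, S.circ_mul]
  group

theorem lambda_one (a : A) : S.lambda a 1 = 1 := by
  rw [lambda, circ_one, inv_mul_cancel]

theorem lambda_lambda (a b c : A) : S.lambda a (S.lambda b c) = S.lambda (S.circ a b) c := by
  simp only [lambda, S.circ_mul, circ_inv, S.circ_assoc]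
  group

theorem lambda_circOne (b : A) : S.lambda S.circOne b = b := by
  rw [lambda, S.circOne_circ, circOne_eq_one, inv_one, one_mul]

def Circ (_ : SkewLeftBrace A) : Type _ := A

instance : Group S.Circ where
  mul := S.circ
  mul_assoc := S.circ_assoc
  one := S.circOne
  one_mul := S.circOne_circ
  mul_one := S.circ_circOne
  inv := S.circInv
  inv_mul_cancel := S.circInv_circ

instance : MulDistribMulAction S.Circ A where
  smul := S.lambda
  one_smul := S.lambda_circOne
  mul_smul a b c := (S.lambda_lambda a b c).symm
  smul_mul := S.lambda_mul
  smul_one := S.lambda_one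

abbrev lambdaAut : S.Circ →* MulAut A := MulDistribMulAction.toMulAut S.Circ A

def toHol : S.Circ →* Hol A where
  toFun a := ⟨a, S.lambdaAut a⟩
  map_one' := SemidirectProduct.ext S.circOne_eq_one (map_one _)
  map_mul' a b := SemidirectProduct.ext (S.mul_lambda a b).symm (map_mul _ a b)

theorem mem_range_toHol_iff (h : Hol A) :
    h ∈ S.toHol.range ↔ ∀ b : A, h.right b = h.left⁻¹ * S.circ h.left b := by
  constructor
  · rintro ⟨a, rfl⟩ b
    rfl
  · intro hh
    exact ⟨h.left, SemidirectProduct.ext rfl (MulEquiv.ext fun b => (hh b).symm)⟩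

theorem toHol_left_mul_right_apply (x : S.Circ) (a : A) :
    (S.toHol x).left * (S.toHol x).right a = S.circ x a :=
  S.mul_lambda x a

theorem isRegularSubgroup_range_toHol : IsRegularSubgroup S.toHol.range := by
  intro a
  let a' : S.Circ := a
  have sends_to_one_iff (x : S.Circ) :
      (S.toHol x).left * (S.toHol x).right a = 1 ↔ x = a'⁻¹ := by
    rw [toHol_left_mul_right_apply, ← circOne_eq_one, ← mul_eq_one_iff_eq_inv]
    rfl
  refine ⟨S.toHol a'⁻¹, ⟨⟨_, rfl⟩, (sends_to_one_iff _).2 rfl⟩, ?_⟩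
  rintro _ ⟨⟨x, rfl⟩, hx⟩
  exact congrArg S.toHol ((sends_to_one_iff x).1 hx)

end SkewLeftBrace

/-- For a skew left brace `A`, the set `{(λ_a, a) : a ∈ A}` (the elements `(f, a)` of the
holomorph of `(A, ·)` with `f = λ_a`, one for each `a ∈ A`) is a regular subgroup of
`Hol(A, ·)`. -/
theorem skewLeftBrace_lambda_graph_regular {A : Type*} [Group A] (S : SkewLeftBrace A) :
    ∃ H : Subgroup (Hol A),
      (∀ h : Hol A, h ∈ H ↔ ∀ b : A, h.right b = h.left⁻¹ * S.circ h.left b) ∧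
      (∀ a : A, ∃ h ∈ H, h.left = a) ∧
      IsRegularSubgroup H :=
  ⟨S.toHol.range, S.mem_range_toHol_iff, fun a => ⟨S.toHol a, ⟨a, rfl⟩, rfl⟩,
    S.isRegularSubgroup_range_toHol⟩
end
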